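/- Let α be a finite type, let g : α → α → Bool be regular with respect to a subgroup S of Equiv.Perm α × Equiv.Perm α, let m be the cardinality of S and fix an enumeration e : Fin m ≃ S. Let N = 2^n and let a, b : Fin N → (Fin n → α). Suppose the map z : Fin N → (Fin n → Bool) defined by z j = (fun i => g (a j i) (b j i)) is 2-to-1, i.e. every value in its range has exactly two preimages. Then the combined map U : Fin N × (Fin n → Fin m) → (Fin n → α) × (Fin n → α) defined by U(j, I) = Unfold(a j, b j)(I) is also 2-to-1: every pair in the range of U has exactly two preimages (j, I). -/

import Mathlib

/-- A bipartite Boolean function `g` is regular with respect to a subgroup `S` of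
`Equiv.Perm α × Equiv.Perm α` if the coordinatewise action of `S` preserves `g` and `S`
acts simply transitively on each fiber of `g`. -/
def IsRegularGadget {α : Type*} (g : α → α → Bool)
    (S : Subgroup (Equiv.Perm α × Equiv.Perm α)) : Prop :=
  (∀ s ∈ S, ∀ x y : α, g (s.1 x) (s.2 y) = g x y) ∧
  (∀ x₁ y₁ x₂ y₂ : α, g x₁ y₁ = g x₂ y₂ →
    ∃! s : S, ((s : Equiv.Perm α × Equiv.Perm α).1 x₁,
               (s : Equiv.Perm α × Equiv.Perm α).2 y₁) = (x₂, y₂))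

/-- The `Unfold` map: given an enumeration `e : Fin m ≃ S` of the symmetry group and an
input `(a, b)` to `g^n`, it sends an index tuple `I : Fin n → Fin m` to the input to `g^n`
obtained by applying the `I i`-th symmetry in the `i`-th coordinate. -/
def Unfold {α : Type*} {S : Subgroup (Equiv.Perm α × Equiv.Perm α)} {m n : ℕ}
    (e : Fin m ≃ S) (a b : Fin n → α) (I : Fin n → Fin m) :
    (Fin n → α) × (Fin n → α) :=
  (fun i => (e (I i) : Equiv.Perm α × Equiv.Perm α).1 (a i),
   fun i => (e (I i) : Equiv.Perm α × Equiv.Perm α).2 (b i))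

/-!
Since `S` preserves `g`, `U (j, I) = p` forces `g^n (a j, b j) = g^n p`; conversely, for each such
`j` simple transitivity of `S` on the fibres of `g` gives exactly one `I` with `U (j, I) = p`.
So `(j, I) ↦ j` is a bijection from the fibre of `U` over `p` onto the fibre of `z` over `g^n p`.
-/

theorem Nat.card_fiber_uncurry_eq_of_injective {ι κ β γ : Type*} (f : ι → κ → β)
    (hf : ∀ j, Function.Injective (f j)) (z : ι → γ) (φ : β → γ)
    (hrange : ∀ j p, (∃ k, f j k = p) ↔ z j = φ p) (p : β) :
    Nat.card {jk : ι × κ // f jk.1 jk.2 = p} = Nat.card {j : ι // z j = φ p} := by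
  refine Nat.card_congr (Equiv.ofBijective
    (fun x => ⟨x.1.1, (hrange _ _).1 ⟨_, x.2⟩⟩) ⟨?_, ?_⟩)
  · rintro ⟨⟨j, k⟩, hk⟩ ⟨⟨j', k'⟩, hk'⟩ hjj'
    obtain rfl : j = j' := congrArg Subtype.val hjj'
    obtain rfl : k = k' := hf j (hk.trans hk'.symm)
    rfl
  · rintro ⟨j, hj⟩
    obtain ⟨k, hk⟩ := (hrange j p).2 hj
    exact ⟨⟨(j, k), hk⟩, rfl⟩

namespace IsRegularGadget

variable {α : Type*} {g : α → α → Bool} {S : Subgroup (Equiv.Perm α × Equiv.Perm α)}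
  {m n : ℕ} (e : Fin m ≃ S)

theorem apply_unfold (hreg : IsRegularGadget g S) (a b : Fin n → α) (I : Fin n → Fin m)
    (i : Fin n) :
    g ((Unfold e a b I).1 i) ((Unfold e a b I).2 i) = g (a i) (b i) :=
  hreg.1 _ (e (I i)).2 _ _

theorem unfold_injective (hreg : IsRegularGadget g S) (a b : Fin n → α) :
    Function.Injective (Unfold e a b) := by
  intro I I' h
  funext i
  have hp := (hreg.apply_unfold e a b I i).symm
  refine e.injective ((hreg.2 _ _ _ _ hp).unique rfl ?_)
  rw [h]
  rfl

theorem exists_unfold_eq_iff (hreg : IsRegularGadget g S) (a b : Fin n → α)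
    (p : (Fin n → α) × (Fin n → α)) :
    (∃ I, Unfold e a b I = p) ↔ ∀ i, g (a i) (b i) = g (p.1 i) (p.2 i) := by
  constructor
  · rintro ⟨I, rfl⟩ i
    exact (hreg.apply_unfold e a b I i).symm
  · intro h
    choose s hs _ using fun i => hreg.2 _ _ _ _ (h i)
    refine ⟨fun i => e.symm (s i), Prod.ext (funext fun i => ?_) (funext fun i => ?_)⟩
    · simpa [Unfold] using congrArg Prod.fst (hs i)
    · simpa [Unfold] using congrArg Prod.snd (hs i)

end IsRegularGadget

theorem unfold_two_to_one_general {α : Type*}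
    (g : α → α → Bool) (S : Subgroup (Equiv.Perm α × Equiv.Perm α))
    (hreg : IsRegularGadget g S) {m n N : ℕ} (e : Fin m ≃ S)
    (a b : Fin N → (Fin n → α))
    (h2to1 : ∀ w : Fin n → Bool, (∃ j, (fun i => g (a j i) (b j i)) = w) →
      Nat.card {j : Fin N // (fun i => g (a j i) (b j i)) = w} = 2) :
    ∀ p : (Fin n → α) × (Fin n → α),
      (∃ jI : Fin N × (Fin n → Fin m), Unfold e (a jI.1) (b jI.1) jI.2 = p) →
      Nat.card {jI : Fin N × (Fin n → Fin m) // Unfold e (a jI.1) (b jI.1) jI.2 = p} = 2 := by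
  rintro p ⟨⟨j₀, I₀⟩, rfl⟩
  rw [Nat.card_fiber_uncurry_eq_of_injective (fun j => Unfold e (a j) (b j))
    (fun j => hreg.unfold_injective e (a j) (b j)) (fun j i => g (a j i) (b j i))
    (fun p i => g (p.1 i) (p.2 i)) fun j p => by rw [hreg.exists_unfold_eq_iff, funext_iff]]
  exact h2to1 _ ⟨j₀, funext fun i => (hreg.apply_unfold e _ _ _ i).symm⟩

/-- If the encoded input `z : j ↦ g^n(a j, b j)` to the Collision problem is 2-to-1, then
the combined map `U : (j, I) ↦ Unfold (a j, b j) I` produces a 2-to-1 list: every pair in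
the range of `U` has exactly two preimages. -/
theorem unfold_two_to_one {α : Type*} [Fintype α]
    (g : α → α → Bool) (S : Subgroup (Equiv.Perm α × Equiv.Perm α))
    (hreg : IsRegularGadget g S) {m n N : ℕ} (hN : N = 2 ^ n) (e : Fin m ≃ S)
    (a b : Fin N → (Fin n → α))
    (h2to1 : ∀ w : Fin n → Bool, (∃ j, (fun i => g (a j i) (b j i)) = w) →
      Nat.card {j : Fin N // (fun i => g (a j i) (b j i)) = w} = 2) :
    ∀ p : (Fin n → α) × (Fin n → α),
      (∃ jI : Fin N × (Fin n → Fin m), Unfold e (a jI.1) (b jI.1) jI.2 = p) →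
      Nat.card {jI : Fin N × (Fin n → Fin m) // Unfold e (a jI.1) (b jI.1) jI.2 = p} = 2 :=
  unfold_two_to_one_general g S hreg e a b h2to1
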